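/- Let n ≥ 5, Z_n(x,y,z,a) be the 4-perturbed reciprocal matrix with x,y,z,a > 0, and w its Perron eigenvector. If a ≤ min{1,y,z} then w_2/w_{n-1} ≥ a, i.e., the edge (2,n-1) is in G_{Z_n(x,y,z,a),w}. -/
import Mathlib

set_option maxHeartbeats 1000000


/-- The reciprocal matrix `Z_n(x,y,z,a)`: all entries equal to one except
(in 1-based indexing) `(1,n-1) = y`, `(1,n) = x`, `(2,n-1) = a`, `(2,n) = z`
and the reciprocals at the transposed positions. -/
noncomputable def Zmat (n : ℕ) (x y z a : ℝ) : Matrix (Fin n) (Fin n) ℝ :=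
  fun i j =>
    if i.val = 0 ∧ j.val = n - 2 then y
    else if i.val = 0 ∧ j.val = n - 1 then x
    else if i.val = 1 ∧ j.val = n - 2 then a
    else if i.val = 1 ∧ j.val = n - 1 then z
    else if i.val = n - 2 ∧ j.val = 0 then y⁻¹
    else if i.val = n - 1 ∧ j.val = 0 then x⁻¹
    else if i.val = n - 2 ∧ j.val = 1 then a⁻¹
    else if i.val = n - 1 ∧ j.val = 1 then z⁻¹
    else 1

/-- if `a ≤ min {1, y, z}` then `w_2 / w_{n-1} ≥ a`, i.e. edge
(2,n-1) is in `G_{Z_n(x,y,z,a),w}`. -/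
theorem zmat_edge_two_nsub1 (n : ℕ) (hn : 5 ≤ n) (x y z a : ℝ)
    (hx : 0 < x) (hy : 0 < y) (hz : 0 < z) (ha : 0 < a)
    (r : ℝ) (w : Fin n → ℝ) (hw : ∀ i, 0 < w i)
    (heig : (Zmat n x y z a).mulVec w = r • w)
    (ha1 : a ≤ 1) (hay : a ≤ y) (haz : a ≤ z) :
    a ≤ w ⟨1, by omega⟩ / w ⟨n - 2, by omega⟩ := by
  have h0 : 0 < n := by omega
  set i0 : Fin n := ⟨0, by omega⟩ with hi0
  set i1 : Fin n := ⟨1, by omega⟩ with hi1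
  set i2 : Fin n := ⟨n - 2, by omega⟩ with hi2
  set i3 : Fin n := ⟨n - 1, by omega⟩ with hi3
  have hS : ∀ i : Fin n, ∑ j, Zmat n x y z a i j * w j = r * w i := by
    intro i
    have := congrFun heig i
    simpa [Matrix.mulVec, dotProduct] using this
  -- distinctness
  have h23 : i2 ≠ i3 := fun h => by
    have : n - 2 = n - 1 := congrArg Fin.val h; omega
  have h01 : i0 ≠ i1 := fun h => by
    have : (0 : ℕ) = 1 := congrArg Fin.val h; omega
  -- positivity of entries
  have hZpos : ∀ i j, 0 < Zmat n x y z a i j := by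
    intro i j; unfold Zmat; split_ifs <;> positivity
  have hr : 0 < r := by
    have h1 : 0 < ∑ j, Zmat n x y z a i0 j * w j :=
      Finset.sum_pos (fun j _ => mul_pos (hZpos i0 j) (hw j)) ⟨i0, Finset.mem_univ _⟩
    rw [hS i0] at h1
    nlinarith [hw i0]
  -- row i1
  have hZ1 : ∀ j : Fin n, Zmat n x y z a i1 j =
      if j = i2 then a else if j = i3 then z else 1 := by
    intro j
    have hv : i1.val = 1 := rfl
    have hv2 : i2.val = n - 2 := rfl
    have hv3 : i3.val = n - 1 := rfl
    unfold Zmat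
    rw [if_neg (by rw [hv]; omega : ¬(i1.val = 0 ∧ j.val = n - 2)),
        if_neg (by rw [hv]; omega : ¬(i1.val = 0 ∧ j.val = n - 1))]
    by_cases hj2 : j.val = n - 2
    · rw [if_pos ⟨hv, hj2⟩, if_pos (Fin.ext (by omega))]
    · rw [if_neg (by rw [hv]; omega : ¬(i1.val = 1 ∧ j.val = n - 2)),
          if_neg (fun h => hj2 (by rw [h, hv2]) : ¬ j = i2)]
      by_cases hj3 : j.val = n - 1
      · rw [if_pos ⟨hv, hj3⟩, if_pos (Fin.ext (by omega))]
      · rw [if_neg (by rw [hv]; omega : ¬(i1.val = 1 ∧ j.val = n - 1)),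
            if_neg (fun h => hj3 (by rw [h, hv3]) : ¬ j = i3),
            if_neg (by rw [hv]; omega : ¬(i1.val = n - 2 ∧ j.val = 0)),
            if_neg (by rw [hv]; omega : ¬(i1.val = n - 1 ∧ j.val = 0)),
            if_neg (by rw [hv]; omega : ¬(i1.val = n - 2 ∧ j.val = 1)),
            if_neg (by rw [hv]; omega : ¬(i1.val = n - 1 ∧ j.val = 1))]
  -- row i2
  have hZ2 : ∀ j : Fin n, Zmat n x y z a i2 j =
      if j = i0 then y⁻¹ else if j = i1 then a⁻¹ else 1 := by
    intro j
    have hv : i2.val = n - 2 := rfl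
    have hv0 : i0.val = 0 := rfl
    have hv1 : i1.val = 1 := rfl
    unfold Zmat
    rw [if_neg (by rw [hv]; omega : ¬(i2.val = 0 ∧ j.val = n - 2)),
        if_neg (by rw [hv]; omega : ¬(i2.val = 0 ∧ j.val = n - 1)),
        if_neg (by rw [hv]; omega : ¬(i2.val = 1 ∧ j.val = n - 2)),
        if_neg (by rw [hv]; omega : ¬(i2.val = 1 ∧ j.val = n - 1))]
    by_cases hj0 : j.val = 0
    · rw [if_pos ⟨hv, hj0⟩, if_pos (Fin.ext (by omega))]
    · rw [if_neg (by rw [hv]; omega : ¬(i2.val = n - 2 ∧ j.val = 0)),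
          if_neg (by rw [hv]; omega : ¬(i2.val = n - 1 ∧ j.val = 0)),
          if_neg (fun h => hj0 (by rw [h, hv0]) : ¬ j = i0)]
      by_cases hj1 : j.val = 1
      · rw [if_pos ⟨hv, hj1⟩, if_pos (Fin.ext (by omega))]
      · rw [if_neg (fun h => hj1 h.2 : ¬(i2.val = n - 2 ∧ j.val = 1)),
            if_neg (by rw [hv]; omega : ¬(i2.val = n - 1 ∧ j.val = 1)),
            if_neg (fun h => hj1 (by rw [h, hv1]) : ¬ j = i1)]
  -- sum identities
  have hA : r * w i1 = (∑ j, w j) + (a - 1) * w i2 + (z - 1) * w i3 := by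
    rw [← hS i1]
    have : ∀ j : Fin n, Zmat n x y z a i1 j * w j =
        w j + ((if j = i2 then (a - 1) * w i2 else 0) +
               (if j = i3 then (z - 1) * w i3 else 0)) := by
      intro j
      rw [hZ1 j]
      by_cases hj2 : j = i2
      · subst hj2; rw [if_pos rfl, if_pos rfl, if_neg h23]; ring
      · rw [if_neg hj2, if_neg hj2]
        by_cases hj3 : j = i3
        · subst hj3; rw [if_pos rfl, if_pos rfl]; ring
        · rw [if_neg hj3, if_neg hj3]; ring
    rw [Finset.sum_congr rfl (fun j _ => this j), Finset.sum_add_distrib,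
        Finset.sum_add_distrib, Finset.sum_ite_eq' Finset.univ i2,
        Finset.sum_ite_eq' Finset.univ i3]
    simp only [Finset.mem_univ, if_true]; ring
  have hB : r * w i2 = (∑ j, w j) + (y⁻¹ - 1) * w i0 + (a⁻¹ - 1) * w i1 := by
    rw [← hS i2]
    have : ∀ j : Fin n, Zmat n x y z a i2 j * w j =
        w j + ((if j = i0 then (y⁻¹ - 1) * w i0 else 0) +
               (if j = i1 then (a⁻¹ - 1) * w i1 else 0)) := by
      intro j
      rw [hZ2 j]
      by_cases hj0 : j = i0
      · subst hj0; rw [if_pos rfl, if_pos rfl, if_neg h01]; ring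
      · rw [if_neg hj0, if_neg hj0]
        by_cases hj1 : j = i1
        · subst hj1; rw [if_pos rfl, if_pos rfl]; ring
        · rw [if_neg hj1, if_neg hj1]; ring
    rw [Finset.sum_congr rfl (fun j _ => this j), Finset.sum_add_distrib,
        Finset.sum_add_distrib, Finset.sum_ite_eq' Finset.univ i0,
        Finset.sum_ite_eq' Finset.univ i1]
    simp only [Finset.mem_univ, if_true]; ring
  have hB' : a * (r * w i2) = a * (∑ j, w j) + (a * y⁻¹ - a) * w i0 + (1 - a) * w i1 := by
    have hainv : a * a⁻¹ = 1 := mul_inv_cancel₀ ha.ne'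
    linear_combination a * hB + w i1 * hainv
  -- sum bound
  have hsum : w i0 + w i1 + w i2 + w i3 ≤ (∑ j, w j) := by
    have hsub : ({i0, i1, i2, i3} : Finset (Fin n)) ⊆ Finset.univ := Finset.subset_univ _
    have h02 : i0 ≠ i2 := fun h => by have : (0:ℕ) = n - 2 := congrArg Fin.val h; omega
    have h03 : i0 ≠ i3 := fun h => by have : (0:ℕ) = n - 1 := congrArg Fin.val h; omega
    have h12 : i1 ≠ i2 := fun h => by have : (1:ℕ) = n - 2 := congrArg Fin.val h; omega
    have h13 : i1 ≠ i3 := fun h => by have : (1:ℕ) = n - 1 := congrArg Fin.val h; omega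
    have := Finset.sum_le_sum_of_subset_of_nonneg hsub (fun i _ _ => (hw i).le)
    rw [Finset.sum_insert (by simp [h01, h02, h03]),
        Finset.sum_insert (by simp [h12, h13]),
        Finset.sum_insert (by simp [h23]), Finset.sum_singleton] at this
    linarith [this]
  have hayi : a * y⁻¹ ≤ 1 := by
    rw [← mul_inv_cancel₀ hy.ne']
    exact mul_le_mul_of_nonneg_right hay (by positivity)
  have hkey : 0 ≤ r * (w i1 - a * w i2) := by
    nlinarith [mul_nonneg (sub_nonneg.2 ha1) (sub_nonneg.2 hsum),
      mul_nonneg (hw i0).le (sub_nonneg.2 hayi),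
      mul_nonneg (hw i3).le (sub_nonneg.2 haz)]
  have hfin : a * w i2 ≤ w i1 := by nlinarith [hkey, hr]
  rw [le_div_iff₀ (hw i2)]
  exact hfin
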